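/- Let X be a germ at 0 ∈ ℂⁿ of holomorphic vector field with no non-constant meromorphic first integral: whenever g, h are holomorphic near 0 with h not identically zero and h·X(g) = g·X(h) near 0, there exists c ∈ ℂ with g = c·h near 0. Suppose Y₁, …, Y_r commute with X, are generically linearly independent (in every neighborhood of 0 there is a point z where Y₁(z), …, Y_r(z) are linearly independent over ℂ), and every vector field Y commuting with X satisfies: for all z near 0 the vectors Y(z), Y₁(z), …, Y_r(z) are ℂ-linearly dependent. Then every vector field Y commuting with X is, as a germ, a ℂ-linear combination of Y₁, …, Y_r; in particular d(X) = r(X) = r. -/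

import Mathlib

/-!
Choose coordinates `ρ` for which the minor `d = det (Yᵢ(z)_{ρ k})` does not vanish identically near
`0`; generic independence of the `Yᵢ` makes this possible. Where `d ≠ 0` the `Yᵢ` are independent,
so by maximality `Y` lies in their span, and Cramer's rule gives an analytic relation
`d • Y = ∑ gᵢ • Yᵢ`, which the identity theorem extends across `{d = 0}`. Bracketing it with `X`
and using `[X, Y] = [X, Yᵢ] = 0` gives `X(d) • Y = ∑ X(gᵢ) • Yᵢ`. Comparing the two relations,
`d · X(gᵢ) = gᵢ · X(d)`, so each `gᵢ / d` is a meromorphic first integral of `X`, hence a constant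
`cᵢ`, and `Y = ∑ cᵢ • Yᵢ`.
-/

open Filter Topology

noncomputable section

/-- Lie bracket of two (germs of) holomorphic vector fields:
`[X,Y](z) = DY(z)(X(z)) - DX(z)(Y(z))`. -/
def lieBr {E : Type*} [NormedAddCommGroup E] [NormedSpace ℂ E] (X Y : E → E) : E → E :=
  fun z => fderiv ℂ Y z (X z) - fderiv ℂ X z (Y z)

/-- `Y` commutes with `X` as germs at `0`: `[X,Y] = 0` near `0`. -/
def Commutes {E : Type*} [NormedAddCommGroup E] [NormedSpace ℂ E] (X Y : E → E) : Prop :=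
  ∀ᶠ z in 𝓝 0, lieBr X Y z = 0

section SelectRows

open Matrix

variable {R K : Type*} [CommRing R] [Field K] {ι κ : Type*} [Fintype ι]

def selectRows (v : ι → κ → R) (ρ : ι → κ) : Matrix ι ι R :=
  Matrix.of fun k i => v i (ρ k)

lemma selectRows_mulVec (v : ι → κ → R) (ρ : ι → κ) (a : ι → R) :
    selectRows v ρ *ᵥ a = fun k => (∑ i, a i • v i) (ρ k) := by
  ext k
  simp [selectRows, mulVec, dotProduct, Finset.sum_apply, mul_comm]

lemma Matrix.cramer_mulVec [DecidableEq ι] (A : Matrix ι ι R) (a : ι → R) :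
    cramer A (A *ᵥ a) = A.det • a := by
  rw [cramer_eq_adjugate_mulVec, mulVec_mulVec, adjugate_mul, smul_mulVec, one_mulVec]

lemma det_selectRows_smul_eq_sum_cramer [DecidableEq ι] {v : ι → κ → R} {y : κ → R}
    (hy : y ∈ Submodule.span R (Set.range v)) (ρ : ι → κ) :
    (selectRows v ρ).det • y = ∑ i, cramer (selectRows v ρ) (fun k => y (ρ k)) i • v i := by
  obtain ⟨a, rfl⟩ := (Submodule.mem_span_range_iff_exists_fun R).1 hy
  rw [← selectRows_mulVec, cramer_mulVec, Finset.smul_sum]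
  simp only [Pi.smul_apply, smul_eq_mul, smul_smul]

lemma linearIndependent_of_det_selectRows_ne_zero [DecidableEq ι] {v : ι → κ → K} {ρ : ι → κ}
    (h : (selectRows v ρ).det ≠ 0) : LinearIndependent K v :=
  LinearIndependent.of_comp (LinearMap.funLeft K K ρ) (linearIndependent_cols_of_det_ne_zero h)

lemma exists_det_selectRows_ne_zero [DecidableEq ι] [Fintype κ] {v : ι → κ → K}
    (hv : LinearIndependent K v) : ∃ ρ : ι → κ, (selectRows v ρ).det ≠ 0 := by
  -- full row rank: the columns of `Matrix.of v` span, so a basis can be picked among them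
  have hspan : ⊤ ≤ Submodule.span K (Set.range (Matrix.of v).col) := by
    refine (Submodule.eq_top_of_finrank_eq ?_).ge
    rw [← rank_eq_finrank_span_cols, LinearIndependent.rank_matrix (M := Matrix.of v) hv,
      Module.finrank_fintype_fun_eq_card]
  let b := Module.Basis.ofSpan hspan
  let b' := b.reindex (b.indexEquiv (Pi.basisFun K ι))
  have hb' : ∀ k, ∃ j, (Matrix.of v).col j = b' k := fun k =>
    Module.Basis.ofSpan_subset hspan (by rw [← b.range_reindex]; exact Set.mem_range_self k)
  choose ρ hρ using hb'
  refine ⟨ρ, (isUnit_iff_ne_zero.1 ((isUnit_iff_isUnit_det _).1 ?_))⟩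
  have hrows : (selectRows v ρ).row = b' := by
    ext k i
    simp [selectRows, ← hρ k]
  rw [← linearIndependent_rows_iff_isUnit, hrows]
  exact b'.linearIndependent

lemma exists_frequently_det_selectRows_ne_zero [DecidableEq ι] [Fintype κ] {α : Type*}
    {l : Filter α} {v : α → ι → κ → K}
    (h : ∃ᶠ z in l, LinearIndependent K (v z)) :
    ∃ ρ : ι → κ, ∃ᶠ z in l, (selectRows (v z) ρ).det ≠ 0 := by
  by_contra! hρ
  obtain ⟨z, hz, hdet⟩ := (h.and_eventually (eventually_all.2 hρ)).exists
  obtain ⟨ρ, hρz⟩ := exists_det_selectRows_ne_zero hz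
  exact hρz (hdet ρ)

end SelectRows

lemma LinearIndependent.mul_eq_mul_of_smul_eq_sum {R M ι : Type*} [CommRing R] [AddCommGroup M]
    [Module R M] [Fintype ι] {v : ι → M} (hv : LinearIndependent R v) {y : M} {a a' : R}
    {b b' : ι → R} (h : a • y = ∑ i, b i • v i) (h' : a' • y = ∑ i, b' i • v i) (i : ι) :
    a * b' i = b i * a' := by
  have hzero : ∑ j, (a * b' j - b j * a') • v j = 0 := by
    simp only [sub_smul, Finset.sum_sub_distrib, mul_comm (b _) a', mul_smul, ← Finset.smul_sum,
      ← h, ← h', smul_comm a a' y, sub_self]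
  exact sub_eq_zero.1 (Fintype.linearIndependent_iff.1 hv _ hzero i)

section Analytic

open Matrix

variable {𝕜 E F : Type*} [NontriviallyNormedField 𝕜] [NormedAddCommGroup E] [NormedSpace 𝕜 E]
  [NormedAddCommGroup F] [NormedSpace 𝕜 F] {x : E}

lemma AnalyticAt.eventually_differentiableAt [CompleteSpace F] {f : E → F}
    (hf : AnalyticAt 𝕜 f x) : ∀ᶠ z in 𝓝 x, DifferentiableAt 𝕜 f z :=
  hf.eventually_analyticAt.mono fun _ hz => hz.differentiableAt

lemma AnalyticAt.fderiv_apply [CompleteSpace F] {f : E → F} {X : E → E} (hf : AnalyticAt 𝕜 f x)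
    (hX : AnalyticAt 𝕜 X x) : AnalyticAt 𝕜 (fun z => fderiv 𝕜 f z (X z)) x :=
  ((ContinuousLinearMap.apply 𝕜 F).analyticAt_bilinear _).comp₂ hX hf.fderiv

lemma AnalyticAt.matrix_det {m : Type*} [Fintype m] [DecidableEq m] {A : E → Matrix m m 𝕜}
    (hA : ∀ i j, AnalyticAt 𝕜 (fun z => A z i j) x) : AnalyticAt 𝕜 (fun z => (A z).det) x := by
  simp only [det_apply, Units.smul_def, zsmul_eq_mul]
  fun_prop

lemma AnalyticAt.matrix_cramer {m : Type*} [Fintype m] [DecidableEq m] {A : E → Matrix m m 𝕜}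
    {b : E → m → 𝕜} (hA : ∀ i j, AnalyticAt 𝕜 (fun z => A z i j) x)
    (hb : ∀ i, AnalyticAt 𝕜 (fun z => b z i) x) (i : m) :
    AnalyticAt 𝕜 (fun z => cramer (A z) (b z) i) x := by
  simp only [cramer_apply]
  refine AnalyticAt.matrix_det fun k j => ?_
  by_cases hj : j = i
  · simpa [hj] using hb k
  · simpa [updateCol_apply, hj] using hA k j

end Analytic

theorem AnalyticAt.eventuallyEq_of_eq_of_ne_zero {E F : Type*} [NormedAddCommGroup E]
    [NormedSpace ℂ E] [NormedAddCommGroup F] [NormedSpace ℂ F] {x : E} {D : E → ℂ} {f g : E → F}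
    (hD : AnalyticAt ℂ D x) (hD₀ : ∃ᶠ z in 𝓝 x, D z ≠ 0) (hf : AnalyticAt ℂ f x)
    (hg : AnalyticAt ℂ g x) (h : ∀ᶠ z in 𝓝 x, D z ≠ 0 → f z = g z) :
    f =ᶠ[𝓝 x] g := by
  obtain ⟨ε, hε, hball⟩ := Metric.eventually_nhds_iff_ball.1
    (hD.eventually_analyticAt.and ((hf.sub hg).eventually_continuousAt.and h))
  filter_upwards [Metric.ball_mem_nhds x hε] with w hw
  by_contra hne
  have hDw : D =ᶠ[𝓝 w] 0 := by
    filter_upwards [(hball w hw).2.1.eventually_ne (sub_ne_zero.2 hne),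
      Metric.isOpen_ball.mem_nhds hw] with z hz hzB
    by_contra hDz
    exact hz (sub_eq_zero.2 ((hball z hzB).2.2 hDz))
  have hD_ball := AnalyticOnNhd.eqOn_zero_of_preconnected_of_eventuallyEq_zero
    (fun z hz => (hball z hz).1) (convex_ball x ε).isPreconnected hw hDw
  exact hD₀ (Metric.eventually_nhds_iff_ball.2 ⟨ε, hε, fun z hz => not_not.2 (hD_ball hz)⟩)

theorem exists_analyticAt_smul_eq_sum {E κ : Type*} [NormedAddCommGroup E] [NormedSpace ℂ E]
    [Fintype κ] {x : E} {r : ℕ} {Ys : Fin r → E → κ → ℂ} {Y : E → κ → ℂ}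
    (hYs : ∀ i, AnalyticAt ℂ (Ys i) x) (hY : AnalyticAt ℂ Y x)
    (hli : ∃ᶠ z in 𝓝 x, LinearIndependent ℂ fun i => Ys i z)
    (hdep : ∀ᶠ z in 𝓝 x, ¬ LinearIndependent ℂ (Fin.cons (Y z) fun i => Ys i z)) :
    ∃ (d : E → ℂ) (g : Fin r → E → ℂ), AnalyticAt ℂ d x ∧ (∀ i, AnalyticAt ℂ (g i) x) ∧
      (∃ᶠ z in 𝓝 x, d z ≠ 0) ∧ (∀ z, d z ≠ 0 → LinearIndependent ℂ fun i => Ys i z) ∧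
      (fun z => d z • Y z) =ᶠ[𝓝 x] fun z => ∑ i, g i z • Ys i z := by
  obtain ⟨ρ, hd₀⟩ := exists_frequently_det_selectRows_ne_zero hli
  have hentries : ∀ k i, AnalyticAt ℂ (fun z => selectRows (fun i => Ys i z) ρ k i) x :=
    fun k i => analyticAt_pi_iff.1 (hYs i) (ρ k)
  have hd := AnalyticAt.matrix_det hentries
  have hg := AnalyticAt.matrix_cramer hentries fun k => analyticAt_pi_iff.1 hY (ρ k)
  have hdli (z) : (selectRows (fun i => Ys i z) ρ).det ≠ 0 → LinearIndependent ℂ fun i => Ys i z :=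
    linearIndependent_of_det_selectRows_ne_zero
  refine ⟨_, _, hd, hg, hd₀, hdli,
    hd.eventuallyEq_of_eq_of_ne_zero hd₀ (by fun_prop) (by fun_prop) ?_⟩
  filter_upwards [hdep] with z hz hdz
  refine det_selectRows_smul_eq_sum_cramer (by_contra fun hspan => hz ?_) ρ
  exact linearIndependent_finCons.2 ⟨hdli z hdz, hspan⟩

section LieBracket

variable {E : Type*} [NormedAddCommGroup E] [NormedSpace ℂ E] {X Y : E → E} {z : E}

lemma lieBr_smul {f : E → ℂ} (hf : DifferentiableAt ℂ f z) (hY : DifferentiableAt ℂ Y z) :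
    lieBr X (fun w => f w • Y w) z = fderiv ℂ f z (X z) • Y z + f z • lieBr X Y z := by
  simp only [lieBr, fderiv_fun_smul hf hY, add_apply, smul_apply,
    ContinuousLinearMap.smulRight_apply, map_smul, smul_sub]
  abel

lemma lieBr_sum {ι : Type*} (s : Finset ι) {Ys : ι → E → E}
    (h : ∀ i ∈ s, DifferentiableAt ℂ (Ys i) z) :
    lieBr X (fun w => ∑ i ∈ s, Ys i w) z = ∑ i ∈ s, lieBr X (Ys i) z := by
  simp only [lieBr, fderiv_fun_sum h, sum_apply, map_sum, Finset.sum_sub_distrib]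

lemma Filter.EventuallyEq.lieBr_eq {Y' : E → E} (h : Y =ᶠ[𝓝 z] Y') :
    lieBr X Y z = lieBr X Y' z := by
  simp only [lieBr, h.fderiv_eq, h.eq_of_nhds]

lemma Commutes.eventually_fderiv_smul_eq_sum {ι : Type*} [Fintype ι] {Ys : ι → E → E}
    {d : E → ℂ} {g : ι → E → ℂ} (hXY : Commutes X Y) (hXYs : ∀ i, Commutes X (Ys i))
    (hd : ∀ᶠ z in 𝓝 0, DifferentiableAt ℂ d z) (hY : ∀ᶠ z in 𝓝 0, DifferentiableAt ℂ Y z)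
    (hg : ∀ i, ∀ᶠ z in 𝓝 0, DifferentiableAt ℂ (g i) z)
    (hYs : ∀ i, ∀ᶠ z in 𝓝 0, DifferentiableAt ℂ (Ys i) z)
    (h : (fun z => d z • Y z) =ᶠ[𝓝 0] fun z => ∑ i, g i z • Ys i z) :
    ∀ᶠ z in 𝓝 0, fderiv ℂ d z (X z) • Y z = ∑ i, fderiv ℂ (g i) z (X z) • Ys i z := by
  filter_upwards [h.eventuallyEq_nhds, hXY, eventually_all.2 hXYs, hd, hY, eventually_all.2 hg,
    eventually_all.2 hYs] with z hz hXYz hXYsz hdz hYz hgz hYsz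
  have := hz.lieBr_eq (X := X)
  rw [lieBr_smul hdz hYz, hXYz, smul_zero, add_zero,
    lieBr_sum (Ys := fun i w => g i w • Ys i w) _ fun i _ => (hgz i).smul (hYsz i)] at this
  simpa only [lieBr_smul (hgz _) (hYsz _), hXYsz, smul_zero, add_zero] using this

end LieBracket

/-- If `X` has no non-constant meromorphic first integral and `r(X) = r`, realized by
`Y₁, …, Y_r`, then every commuting vector field is a `ℂ`-linear combination of the `Yᵢ`
(in particular `d(X) = r(X) = r`). -/
theorem stmt4 (n r : ℕ) (X : (Fin n → ℂ) → (Fin n → ℂ)) (hX : AnalyticAt ℂ X 0)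
    -- `X` has no non-constant meromorphic first integral
    (hmero : ∀ g h : (Fin n → ℂ) → ℂ, AnalyticAt ℂ g 0 → AnalyticAt ℂ h 0 →
      ¬ (h =ᶠ[𝓝 0] fun _ => 0) →
      (∀ᶠ z in 𝓝 0, h z * fderiv ℂ g z (X z) = g z * fderiv ℂ h z (X z)) →
      ∃ c : ℂ, g =ᶠ[𝓝 0] fun z => c * h z)
    (Ys : Fin r → ((Fin n → ℂ) → (Fin n → ℂ)))
    (hYa : ∀ i, AnalyticAt ℂ (Ys i) 0)
    (hYc : ∀ i, Commutes X (Ys i))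
    -- the `Yᵢ` are generically linearly independent
    (hgli : ∀ U ∈ 𝓝 (0 : Fin n → ℂ), ∃ z ∈ U, LinearIndependent ℂ (fun i => Ys i z))
    -- every commuting vector field is everywhere dependent with the `Yᵢ` near `0`
    (hmax : ∀ Z : (Fin n → ℂ) → (Fin n → ℂ), AnalyticAt ℂ Z 0 → Commutes X Z →
      ∀ᶠ z in 𝓝 (0 : Fin n → ℂ),
        ¬ LinearIndependent ℂ (Fin.cons (Z z) (fun i => Ys i z) : Fin (r + 1) → Fin n → ℂ)) :
    ∀ Y : (Fin n → ℂ) → (Fin n → ℂ), AnalyticAt ℂ Y 0 → Commutes X Y →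
      ∃ c : Fin r → ℂ, Y =ᶠ[𝓝 0] fun z => ∑ i, c i • Ys i z := by
  intro Y hY hXY
  obtain ⟨d, g, hd, hg, hd₀, hli, hdecomp⟩ := exists_analyticAt_smul_eq_sum hYa hY
    (frequently_iff.2 fun hU => hgli _ hU) (hmax Y hY hXY)
  have hXdecomp := hXY.eventually_fderiv_smul_eq_sum hYc hd.eventually_differentiableAt
    hY.eventually_differentiableAt (fun i => (hg i).eventually_differentiableAt)
    (fun i => (hYa i).eventually_differentiableAt) hdecomp
  have hfirst (i) : ∀ᶠ z in 𝓝 0, d z * fderiv ℂ (g i) z (X z) = g i z * fderiv ℂ d z (X z) := by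
    have hXg := (hg i).fderiv_apply hX
    have hXd := hd.fderiv_apply hX
    refine hd.eventuallyEq_of_eq_of_ne_zero hd₀ (by fun_prop) (by fun_prop) ?_
    filter_upwards [hdecomp, hXdecomp] with z h h' hdz
    exact (hli z hdz).mul_eq_mul_of_smul_eq_sum h h' i
  choose c hc using fun i => hmero (g i) d (hg i) hd (not_eventually.2 hd₀) (hfirst i)
  refine ⟨c, hd.eventuallyEq_of_eq_of_ne_zero hd₀ hY (by fun_prop) ?_⟩
  filter_upwards [hdecomp, eventually_all.2 hc] with z hz hcz hdz
  refine smul_right_injective _ hdz ?_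
  simp only [hz, hcz, Finset.smul_sum, smul_smul, mul_comm (d z)]
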